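/- Fix r_max > 0, K ∈ ℕ, ε > 0, ρ ≥ 0, and a partition of [N] into sets 𝒩* (size K), 𝒩ᶜ, 𝒩⁰, with MNL parameters v_i = 1/K + ε and r_i = r_max for i ∈ 𝒩*, v_i = 1/K and r_i = r_max for i ∈ 𝒩ᶜ, v_i = 1 and r_i = 0 for i ∈ 𝒩⁰ (and v_0 = 1, r_0 = 0). For any assortment S with |S| ≤ K, the constant-radius robust expected revenue satisfies R_ρ(S) = sup_{λ≥0} { −λ·log( e^{−r_max/λ} + (1 − e^{−r_max/λ}) / (1 + (1/K)·|S∩𝒩ᶜ|/(1+|S∩𝒩⁰|) + (1/K + ε)·|S∩𝒩*|/(1+|S∩𝒩⁰|)) ) − λρ }, and is maximized over all such S by S = 𝒩*. -/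

import Mathlib

open Finset

/-- Supremum over dual variables `λ ≥ 0` of a real-valued function. -/
noncomputable def dualSup (f : ℝ → ℝ) : ℝ := sSup (f '' Set.Ici (0 : ℝ))

/-!
When every revenue is `0` or `R`, the expectation of `exp (-r / λ)` under the MNL choice
probabilities depends only on the total weight `W₀` of the zero-revenue options and `W₁` of the
others: it equals `E + (1 - E) / (1 + W₁ / W₀)` with `E = exp (-R / λ)`. The dual objective
`-λ log (…) - λρ` increases with the denominator `1 + W₁ / W₀`, and in the hard instance this
denominator is largest for `𝒩*`, which holds `K` of the heaviest revenue-`R` items and no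
zero-revenue item. So the objective of `𝒩*` dominates that of every `S` pointwise in `λ`.
-/

lemma dualSup_mono {f g : ℝ → ℝ} (hfg : ∀ l, 0 ≤ l → f l ≤ g l)
    (hg : BddAbove (g '' Set.Ici 0)) : dualSup f ≤ dualSup g := by
  refine csSup_le (Set.image_nonempty.mpr Set.nonempty_Ici) ?_
  rintro _ ⟨l, hl, rfl⟩
  exact (hfg l hl).trans (le_csSup hg (Set.mem_image_of_mem g hl))

lemma sum_div_mul_exp_of_two_revenues {ι : Type*} (A : Finset ι) (p : ι → Prop)
    [DecidablePred p] (v r : ι → ℝ) (R l : ℝ) (hr : ∀ i ∈ A, r i = if p i then 0 else R)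
    (hW₀ : 0 < ∑ i ∈ A with p i, v i) (hW₁ : 0 ≤ ∑ i ∈ A with ¬p i, v i) :
    ∑ i ∈ A, (v i / ∑ j ∈ A, v j) * Real.exp (-r i / l) =
      Real.exp (-R / l) + (1 - Real.exp (-R / l)) /
        (1 + (∑ i ∈ A with ¬p i, v i) / ∑ i ∈ A with p i, v i) := by
  set W₀ := ∑ i ∈ A with p i, v i
  set W₁ := ∑ i ∈ A with ¬p i, v i
  set E := Real.exp (-R / l)
  have htotal : ∑ j ∈ A, v j = W₀ + W₁ := (sum_filter_add_sum_filter_not A p v).symm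
  have hexp : ∑ i ∈ A, v i * Real.exp (-r i / l) = W₀ + W₁ * E := by
    rw [← sum_filter_add_sum_filter_not A p, sum_mul]
    congr 1 <;> refine sum_congr rfl fun i hi => ?_ <;>
      obtain ⟨hiA, hpi⟩ := mem_filter.mp hi
    · simp [hr i hiA, hpi]
    · simp [hr i hiA, hpi, E]
  simp_rw [div_mul_eq_mul_div, ← sum_div, hexp, htotal]
  field_simp
  ring

lemma exp_neg_div_le_one {R l : ℝ} (hR : 0 ≤ R) (hl : 0 ≤ l) : Real.exp (-R / l) ≤ 1 :=
  Real.exp_le_one_iff.mpr (div_nonpos_of_nonpos_of_nonneg (neg_nonpos.mpr hR) hl)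

lemma neg_mul_log_add_one_sub_div_le_of_le {E l D D' : ℝ} (hE₀ : 0 < E) (hE₁ : E ≤ 1)
    (hl : 0 ≤ l) (hD : 0 < D) (hDD' : D ≤ D') :
    -l * Real.log (E + (1 - E) / D) ≤ -l * Real.log (E + (1 - E) / D') := by
  have hmix : E + (1 - E) / D' ≤ E + (1 - E) / D :=
    add_le_add_right (div_le_div_of_nonneg_left (sub_nonneg.mpr hE₁) hD hDD') E
  have hpos : 0 < E + (1 - E) / D' :=
    add_pos_of_pos_of_nonneg hE₀ (div_nonneg (sub_nonneg.mpr hE₁) (hD.trans_le hDD').le)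
  exact mul_le_mul_of_nonpos_left (Real.log_le_log hpos hmix) (neg_nonpos.mpr hl)

lemma neg_mul_log_exp_add_one_sub_div_sub_le {R ρ l D : ℝ} (hR : 0 ≤ R) (hρ : 0 ≤ ρ)
    (hl : 0 ≤ l) (hD : 0 < D) :
    -l * Real.log (Real.exp (-R / l) + (1 - Real.exp (-R / l)) / D) - l * ρ ≤ R := by
  have hmix : Real.exp (-R / l) ≤ Real.exp (-R / l) + (1 - Real.exp (-R / l)) / D :=
    le_add_of_nonneg_right (div_nonneg (sub_nonneg.mpr (exp_neg_div_le_one hR hl)) hD.le)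
  have hlog : -l * Real.log (Real.exp (-R / l) + (1 - Real.exp (-R / l)) / D) ≤
      -l * (-R / l) := by
    simpa using
      mul_le_mul_of_nonpos_left (Real.log_le_log (Real.exp_pos _) hmix) (neg_nonpos.mpr hl)
  have hRl : -l * (-R / l) ≤ R := by
    rcases hl.eq_or_lt with rfl | hl
    · simpa using hR
    · rw [neg_div, neg_mul_neg, mul_div_cancel₀ R hl.ne']
  linarith [mul_nonneg hl hρ]

section HardInstance

variable {K : ℕ} {ε : ℝ} {Nstar Nc N0 S : Finset ℕ} {v : ℕ → ℝ}

lemma hard_instance_zero_revenue_weight (h0 : 0 ∉ S) (hd2 : Disjoint Nstar N0)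
    (hd3 : Disjoint Nc N0)
    (hv : ∀ i, v i = if i = 0 then 1 else
      if i ∈ Nstar then 1 / K + ε else if i ∈ Nc then 1 / K else 1) :
    ∑ i ∈ insert 0 S with i = 0 ∨ i ∈ N0, v i = 1 + #(S ∩ N0) := by
  have hfilter : {i ∈ S | i = 0 ∨ i ∈ N0} = S ∩ N0 := by
    rw [← filter_mem_eq_inter]
    exact filter_congr fun i hi => by simp [ne_of_mem_of_not_mem hi h0]
  have hweight : ∀ i ∈ S ∩ N0, v i = 1 := fun i hi => by
    obtain ⟨hiS, hi0⟩ := mem_inter.mp hi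
    simp [hv, disjoint_right.mp hd2 hi0, disjoint_right.mp hd3 hi0, ne_of_mem_of_not_mem hiS h0]
  rw [filter_insert, if_pos (Or.inl rfl), sum_insert (by simp [h0]), hfilter,
    sum_eq_card_nsmul hweight, hv 0, if_pos rfl, nsmul_one]

lemma hard_instance_positive_revenue_weight (hS : S ⊆ Nstar ∪ Nc ∪ N0) (h0 : 0 ∉ S)
    (hd1 : Disjoint Nstar Nc) (hd2 : Disjoint Nstar N0) (hd3 : Disjoint Nc N0)
    (hv : ∀ i, v i = if i = 0 then 1 else
      if i ∈ Nstar then 1 / K + ε else if i ∈ Nc then 1 / K else 1) :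
    ∑ i ∈ insert 0 S with ¬(i = 0 ∨ i ∈ N0), v i =
      (1 / K + ε) * #(S ∩ Nstar) + 1 / K * #(S ∩ Nc) := by
  have hfilter : {i ∈ S | ¬(i = 0 ∨ i ∈ N0)} = S ∩ Nstar ∪ S ∩ Nc := by
    ext i
    have hi := @hS i
    grind [disjoint_left]
  have hstar : ∀ i ∈ S ∩ Nstar, v i = 1 / K + ε := fun i hi => by
    obtain ⟨hiS, his⟩ := mem_inter.mp hi
    simp [hv, his, ne_of_mem_of_not_mem hiS h0]
  have hc : ∀ i ∈ S ∩ Nc, v i = 1 / K := fun i hi => by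
    obtain ⟨hiS, hic⟩ := mem_inter.mp hi
    simp [hv, disjoint_right.mp hd1 hic, hic, ne_of_mem_of_not_mem hiS h0]
  rw [filter_insert, if_neg (by simp), hfilter,
    sum_union (hd1.mono inter_subset_right inter_subset_right),
    sum_eq_card_nsmul hstar, sum_eq_card_nsmul hc, nsmul_eq_mul, nsmul_eq_mul]
  ring

lemma hard_instance_sum_div_mul_exp (hS : S ⊆ Nstar ∪ Nc ∪ N0) (h0 : 0 ∉ S)
    (hd1 : Disjoint Nstar Nc) (hd2 : Disjoint Nstar N0) (hd3 : Disjoint Nc N0) (hε : 0 ≤ ε)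
    (rmax l : ℝ) (r : ℕ → ℝ)
    (hv : ∀ i, v i = if i = 0 then 1 else
      if i ∈ Nstar then 1 / K + ε else if i ∈ Nc then 1 / K else 1)
    (hr : ∀ i, r i = if i = 0 ∨ i ∈ N0 then 0 else rmax) :
    ∑ i ∈ insert 0 S, (v i / ∑ j ∈ insert 0 S, v j) * Real.exp (-r i / l) =
      Real.exp (-rmax / l) + (1 - Real.exp (-rmax / l)) /
        (1 + 1 / K * (#(S ∩ Nc) : ℝ) / (1 + #(S ∩ N0)) +
          (1 / K + ε) * (#(S ∩ Nstar) : ℝ) / (1 + #(S ∩ N0))) := by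
  have hW₀ := hard_instance_zero_revenue_weight h0 hd2 hd3 hv
  have hW₁ := hard_instance_positive_revenue_weight hS h0 hd1 hd2 hd3 hv
  rw [sum_div_mul_exp_of_two_revenues _ _ v r rmax l (fun i _ => hr i)
    (by rw [hW₀]; positivity) (by rw [hW₁]; positivity), hW₀, hW₁]
  ring

lemma hard_instance_denom_pos (hε : 0 ≤ ε) (a b c : ℕ) :
    0 < 1 + 1 / K * (b : ℝ) / (1 + c) + (1 / K + ε) * (a : ℝ) / (1 + c) := by
  positivity

lemma hard_instance_denom_le (hε : 0 ≤ ε) (hd1 : Disjoint Nstar Nc) (hd2 : Disjoint Nstar N0)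
    (hcard : #Nstar = K) (hSK : #S ≤ K) :
    1 + 1 / K * (#(S ∩ Nc) : ℝ) / (1 + #(S ∩ N0)) +
        (1 / K + ε) * (#(S ∩ Nstar) : ℝ) / (1 + #(S ∩ N0)) ≤
      1 + 1 / K * (#(Nstar ∩ Nc) : ℝ) / (1 + #(Nstar ∩ N0)) +
        (1 / K + ε) * (#(Nstar ∩ Nstar) : ℝ) / (1 + #(Nstar ∩ N0)) := by
  have hab : #(S ∩ Nstar) + #(S ∩ Nc) ≤ K := by
    rw [← card_union_of_disjoint (hd1.mono inter_subset_right inter_subset_right)]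
    exact (card_le_card (union_subset inter_subset_left inter_subset_left)).trans hSK
  rw [disjoint_iff_inter_eq_empty.mp hd1, disjoint_iff_inter_eq_empty.mp hd2, inter_self, hcard]
  calc 1 + 1 / K * (#(S ∩ Nc) : ℝ) / (1 + #(S ∩ N0)) +
        (1 / K + ε) * (#(S ∩ Nstar) : ℝ) / (1 + #(S ∩ N0))
      = 1 + (1 / K * #(S ∩ Nc) + (1 / K + ε) * #(S ∩ Nstar)) / (1 + #(S ∩ N0)) := by ring
    _ ≤ 1 + (1 / K * #(S ∩ Nc) + (1 / K + ε) * #(S ∩ Nstar)) := by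
      gcongr
      exact div_le_self (by positivity) (by simp)
    _ ≤ 1 + (1 / K + ε) * K := by
      have hc : 1 / K * (#(S ∩ Nc) : ℝ) ≤ (1 / K + ε) * #(S ∩ Nc) := by
        gcongr; linarith
      have hab' : (1 / K + ε) * ((#(S ∩ Nstar) : ℝ) + #(S ∩ Nc)) ≤ (1 / K + ε) * K := by
        gcongr; exact_mod_cast hab
      linarith
    _ = _ := by simp

end HardInstance

theorem hard_instance_optimal_robust_assortment_general (N K : ℕ)
    (rmax ε ρ : ℝ) (hr : 0 < rmax) (hε : 0 < ε) (hρ : 0 ≤ ρ)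
    (Nstar Nc N0 : Finset ℕ)
    (hpart : Nstar ∪ Nc ∪ N0 = Finset.Icc 1 N)
    (hd1 : Disjoint Nstar Nc) (hd2 : Disjoint Nstar N0) (hd3 : Disjoint Nc N0)
    (hcard : Nstar.card = K)
    (v : ℕ → ℝ) (r : ℕ → ℝ)
    (hv : ∀ i, v i = if i = 0 then 1 else
      if i ∈ Nstar then 1 / K + ε else if i ∈ Nc then 1 / K else 1)
    (hrdef : ∀ i, r i = if i = 0 ∨ i ∈ N0 then 0 else rmax) :
    (∀ S : Finset ℕ, S ⊆ Finset.Icc 1 N → S.card ≤ K →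
      dualSup (fun l =>
          -l * Real.log (∑ i ∈ insert 0 S,
              (v i / ∑ j ∈ insert 0 S, v j) * Real.exp (-(r i) / l)) - l * ρ) =
        dualSup (fun l =>
          -l * Real.log (Real.exp (-rmax / l) +
              (1 - Real.exp (-rmax / l)) /
                (1 + (1 / K) * ((S ∩ Nc).card : ℝ) / (1 + ((S ∩ N0).card : ℝ)) +
                  (1 / K + ε) * ((S ∩ Nstar).card : ℝ) / (1 + ((S ∩ N0).card : ℝ)))) -
            l * ρ)) ∧
    (∀ S : Finset ℕ, S ⊆ Finset.Icc 1 N → S.card ≤ K →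
      dualSup (fun l =>
          -l * Real.log (∑ i ∈ insert 0 S,
              (v i / ∑ j ∈ insert 0 S, v j) * Real.exp (-(r i) / l)) - l * ρ) ≤
        dualSup (fun l =>
          -l * Real.log (∑ i ∈ insert 0 Nstar,
              (v i / ∑ j ∈ insert 0 Nstar, v j) * Real.exp (-(r i) / l)) - l * ρ)) := by
  have hassort : ∀ S ⊆ Icc 1 N, S ⊆ Nstar ∪ Nc ∪ N0 ∧ 0 ∉ S :=
    fun S hS => ⟨hpart ▸ hS, fun h0 => by simpa using hS h0⟩
  have hsum : ∀ S ⊆ Icc 1 N, ∀ l, _ := fun S hS l =>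
    hard_instance_sum_div_mul_exp (hassort S hS).1 (hassort S hS).2 hd1 hd2 hd3 hε.le rmax l r
      hv hrdef
  refine ⟨fun S hS _ => by simp only [hsum S hS], fun S hS hSK => ?_⟩
  simp only [hsum S hS, hsum Nstar (hpart ▸ subset_union_left.trans subset_union_left)]
  refine dualSup_mono (fun l hl => ?_) ⟨rmax, ?_⟩
  · exact sub_le_sub_right (neg_mul_log_add_one_sub_div_le_of_le (Real.exp_pos _)
      (exp_neg_div_le_one hr.le hl) hl (hard_instance_denom_pos hε.le _ _ _)
      (hard_instance_denom_le hε.le hd1 hd2 hcard hSK)) _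
  · rintro _ ⟨l, hl, rfl⟩
    exact neg_mul_log_exp_add_one_sub_div_sub_le hr.le hρ hl (hard_instance_denom_pos hε.le _ _ _)

/-- Hard-instance optimal robust assortment: partition `[N] = 𝒩* ∪ 𝒩ᶜ ∪ 𝒩⁰` with
`|𝒩*| = K`, MNL parameters `v i = 1/K + ε, r i = r_max` on `𝒩*`,
`v i = 1/K, r i = r_max` on `𝒩ᶜ`, `v i = 1, r i = 0` on `𝒩⁰` (and `v 0 = 1, r 0 = 0`).
For every assortment `S` with `|S| ≤ K`, the constant-radius robust expected revenue
(in its dual form) equals the displayed simplification, and it is maximized over all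
such `S` by `S = 𝒩*`. -/
theorem hard_instance_optimal_robust_assortment (N K : ℕ) (hK : 0 < K)
    (rmax ε ρ : ℝ) (hr : 0 < rmax) (hε : 0 < ε) (hρ : 0 ≤ ρ)
    (Nstar Nc N0 : Finset ℕ)
    (hpart : Nstar ∪ Nc ∪ N0 = Finset.Icc 1 N)
    (hd1 : Disjoint Nstar Nc) (hd2 : Disjoint Nstar N0) (hd3 : Disjoint Nc N0)
    (hcard : Nstar.card = K)
    (v : ℕ → ℝ) (r : ℕ → ℝ)
    (hv : ∀ i, v i = if i = 0 then 1 else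
      if i ∈ Nstar then 1 / K + ε else if i ∈ Nc then 1 / K else 1)
    (hrdef : ∀ i, r i = if i = 0 ∨ i ∈ N0 then 0 else rmax) :
    (∀ S : Finset ℕ, S ⊆ Finset.Icc 1 N → S.card ≤ K →
      dualSup (fun l =>
          -l * Real.log (∑ i ∈ insert 0 S,
              (v i / ∑ j ∈ insert 0 S, v j) * Real.exp (-(r i) / l)) - l * ρ) =
        dualSup (fun l =>
          -l * Real.log (Real.exp (-rmax / l) +
              (1 - Real.exp (-rmax / l)) /
                (1 + (1 / K) * ((S ∩ Nc).card : ℝ) / (1 + ((S ∩ N0).card : ℝ)) +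
                  (1 / K + ε) * ((S ∩ Nstar).card : ℝ) / (1 + ((S ∩ N0).card : ℝ)))) -
            l * ρ)) ∧
    (∀ S : Finset ℕ, S ⊆ Finset.Icc 1 N → S.card ≤ K →
      dualSup (fun l =>
          -l * Real.log (∑ i ∈ insert 0 S,
              (v i / ∑ j ∈ insert 0 S, v j) * Real.exp (-(r i) / l)) - l * ρ) ≤
        dualSup (fun l =>
          -l * Real.log (∑ i ∈ insert 0 Nstar,
              (v i / ∑ j ∈ insert 0 Nstar, v j) * Real.exp (-(r i) / l)) - l * ρ)) :=
  hard_instance_optimal_robust_assortment_general N K rmax ε ρ hr hε hρ Nstar Nc N0 hpart hd1 hd2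
    hd3 hcard v r hv hrdef
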